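/- arXiv:1810.03711 — 2 statements merged into one kernel-verified Lean document; each statement's English description precedes it below -/
import Mathlib

section
/- The product G_b(φ) · G⁺_b(φ) has upper-left 2×2 block equal to the identity matrix and (1,3), (2,3) entries equal to zero, i.e. the first two rows of G_b(φ)G⁺_b(φ) are [1,0,0] and [0,1,0]. -/
open Real

theorem offset_tracked_vehicle_pinv_right_rows
    (χ d b φ : ℝ) (hχ : χ ∈ Set.Ioc (0:ℝ) 1) (hd : 0 < d) (hb : b ≠ 0) :
    ((!![cos φ / 2 + χ * b * sin φ / d, cos φ / 2 - χ * b * sin φ / d;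
         sin φ / 2 - χ * b * cos φ / d, sin φ / 2 + χ * b * cos φ / d;
         -χ/d, χ/d] : Matrix (Fin 3) (Fin 2) ℝ) *
      (!![cos φ + d * sin φ / (2*χ*b), sin φ - d * cos φ / (2*χ*b), 0;
          cos φ - d * sin φ / (2*χ*b), sin φ + d * cos φ / (2*χ*b), 0] : Matrix (Fin 2) (Fin 3) ℝ)) 0
      = ![1, 0, 0] ∧
    ((!![cos φ / 2 + χ * b * sin φ / d, cos φ / 2 - χ * b * sin φ / d;
         sin φ / 2 - χ * b * cos φ / d, sin φ / 2 + χ * b * cos φ / d;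
         -χ/d, χ/d] : Matrix (Fin 3) (Fin 2) ℝ) *
      (!![cos φ + d * sin φ / (2*χ*b), sin φ - d * cos φ / (2*χ*b), 0;
          cos φ - d * sin φ / (2*χ*b), sin φ + d * cos φ / (2*χ*b), 0] : Matrix (Fin 2) (Fin 3) ℝ)) 1
      = ![0, 1, 0] := by
  
  have hχ0 : χ ≠ 0 := ne_of_gt hχ.1
  have hd0 : d ≠ 0 := ne_of_gt hd
  have hpyth : sin φ ^ 2 + cos φ ^ 2 = 1 := sin_sq_add_cos_sq φ
  constructor <;>
  · funext j
    fin_cases j <;>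
      simp [Matrix.mul_apply, Fin.sum_univ_two] <;>
      field_simp <;>
      first
      | linear_combination (4*χ*b*d) * hpyth
      | ring
end

section
/- Let f_K(φ, v) = T_s G_b(φ) v with G_b(φ) the offset tracked-vehicle matrix and g_K(Δx, φ) the map sending Δx ∈ ℝ² to G⁺_b(φ) applied to (Δx₁, Δx₂, ξ) for any third component ξ (which is irrelevant since the third column of G⁺_b is zero). Then the first two components of f_K(φ, g_K(Δx, φ)) equal Δx, realizing exact feedback linearization of the planar position of the offset point. -/
/-!
The first two rows of `G_b(φ) G⁺_b(φ)` are those of the `3 × 3` identity: the top `2 × 2` block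
is the identity by `sin² φ + cos² φ = 1`, and the third column vanishes with that of `G⁺_b(φ)`,
so `ξ` is discarded. The sampling time `T_s` cancels against the `1 / T_s` of the control law.
-/

open Real Matrix

namespace OffsetTracked

noncomputable def matrix (χ d b φ : ℝ) : Matrix (Fin 3) (Fin 2) ℝ :=
  !![cos φ / 2 + χ * b * sin φ / d, cos φ / 2 - χ * b * sin φ / d;
     sin φ / 2 - χ * b * cos φ / d, sin φ / 2 + χ * b * cos φ / d;
     -χ/d, χ/d]

noncomputable def pinv (χ d b φ : ℝ) : Matrix (Fin 2) (Fin 3) ℝ :=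
  !![cos φ + d * sin φ / (2*χ*b), sin φ - d * cos φ / (2*χ*b), 0;
     cos φ - d * sin φ / (2*χ*b), sin φ + d * cos φ / (2*χ*b), 0]

theorem matrix_mul_pinv_castSucc {χ d b : ℝ} (hχ : χ ≠ 0) (hd : d ≠ 0) (hb : b ≠ 0) (φ : ℝ)
    (i : Fin 2) : (matrix χ d b φ * pinv χ d b φ) i.castSucc = Pi.single i.castSucc 1 := by
  have hs := sin_sq_add_cos_sq φ
  ext j
  fin_cases i <;> fin_cases j <;>
    simp only [matrix, pinv, mul_apply, Fin.sum_univ_two, of_apply, cons_val, Fin.castSucc_zero,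
      Fin.castSucc_one, Fin.reduceFinMk, Pi.single_apply, Fin.reduceEq, mul_zero, add_zero, if_true,
      if_false] <;> field_simp
  · linear_combination 4 * χ * b * d * hs
  · ring
  · ring
  · linear_combination 4 * χ * b * d * hs

theorem matrix_mulVec_pinv_mulVec_castSucc {χ d b : ℝ} (hχ : χ ≠ 0) (hd : d ≠ 0) (hb : b ≠ 0)
    (φ : ℝ) (v : Fin 3 → ℝ) (i : Fin 2) :
    (matrix χ d b φ *ᵥ (pinv χ d b φ *ᵥ v)) i.castSucc = v i.castSucc := by
  rw [mulVec_mulVec, mulVec, matrix_mul_pinv_castSucc hχ hd hb, single_one_dotProduct]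

end OffsetTracked

theorem first_order_feedback_linearization
    (T_s χ d b φ : ℝ) (hT : 0 < T_s) (hχ : χ ∈ Set.Ioc (0:ℝ) 1) (hd : 0 < d) (hb : b ≠ 0) :
    ∀ (Δx : Fin 2 → ℝ) (ξ : ℝ),
      (T_s • (!![cos φ / 2 + χ * b * sin φ / d, cos φ / 2 - χ * b * sin φ / d;
                 sin φ / 2 - χ * b * cos φ / d, sin φ / 2 + χ * b * cos φ / d;
                 -χ/d, χ/d] : Matrix (Fin 3) (Fin 2) ℝ).mulVec
          ((1 / T_s) • (!![cos φ + d * sin φ / (2*χ*b), sin φ - d * cos φ / (2*χ*b), 0;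
              cos φ - d * sin φ / (2*χ*b), sin φ + d * cos φ / (2*χ*b), 0] :
                Matrix (Fin 2) (Fin 3) ℝ).mulVec ![Δx 0, Δx 1, ξ])) 0 = Δx 0 ∧
      (T_s • (!![cos φ / 2 + χ * b * sin φ / d, cos φ / 2 - χ * b * sin φ / d;
                 sin φ / 2 - χ * b * cos φ / d, sin φ / 2 + χ * b * cos φ / d;
                 -χ/d, χ/d] : Matrix (Fin 3) (Fin 2) ℝ).mulVec
          ((1 / T_s) • (!![cos φ + d * sin φ / (2*χ*b), sin φ - d * cos φ / (2*χ*b), 0;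
              cos φ - d * sin φ / (2*χ*b), sin φ + d * cos φ / (2*χ*b), 0] :
                Matrix (Fin 2) (Fin 3) ℝ).mulVec ![Δx 0, Δx 1, ξ])) 1 = Δx 1 := by
  intro Δx ξ
  rw [mulVec_smul, smul_smul, mul_one_div_cancel hT.ne', one_smul]
  have planar := OffsetTracked.matrix_mulVec_pinv_mulVec_castSucc hχ.1.ne' hd.ne' hb φ
    ![Δx 0, Δx 1, ξ]
  exact ⟨planar 0, planar 1⟩
end
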